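/- arXiv:1412.1004 — 3 statements merged into one kernel-verified Lean document; each statement's English description precedes it below -/
import Mathlib

section
/- Let A and B be rigid blocks of a sparse graph G such that A ∩ B has at least one vertex and both A and B contain at least 3 vertices of type 1. Then A ∩ B contains at least 3 vertices of type 1, and both A ∪ B and A ∩ B are rigid blocks. -/
open SimpleGraph

variable {V : Type*}

/-- Number of type-1 vertices in a vertex set. -/
noncomputable def n1 (t1 : V → Prop) (S : Set V) : ℕ := {v ∈ S | t1 v}.ncard

/-- Number of type-2 vertices in a vertex set. -/
noncomputable def n2 (t1 : V → Prop) (S : Set V) : ℕ := {v ∈ S | ¬ t1 v}.ncard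

/-- Number of edges of `G` with both endpoints in `S`. -/
noncomputable def edgesIn (G : SimpleGraph V) (S : Set V) : ℕ :=
  {e ∈ G.edgeSet | ∀ v ∈ e, v ∈ S}.ncard

/-- Sparsity: every subgraph on `n' ≥ 2` vertices has at most
`n₁' + 2 n₂' + min 0 (n₁' - 3)` edges. -/
def Sparse (G : SimpleGraph V) (t1 : V → Prop) : Prop :=
  ∀ S : Set V, 2 ≤ S.ncard →
    (edgesIn G S : ℤ) ≤ (n1 t1 S : ℤ) + 2 * n2 t1 S + min 0 ((n1 t1 S : ℤ) - 3)

/-- Minimal rigidity: either one vertex, or sparse with exactly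
`n₁ + 2 n₂ + min 0 (n₁ - 3)` edges. -/
def MinRigid (G : SimpleGraph V) (t1 : V → Prop) : Prop :=
  Nat.card V = 1 ∨
    (Sparse G t1 ∧
      (G.edgeSet.ncard : ℤ) = (n1 t1 Set.univ : ℤ) + 2 * n2 t1 Set.univ +
        min 0 ((n1 t1 Set.univ : ℤ) - 3))

/-- Rigidity: contains a spanning minimally rigid subgraph. -/
def Rigid (G : SimpleGraph V) (t1 : V → Prop) : Prop :=
  ∃ H : SimpleGraph V, H ≤ G ∧ MinRigid H t1

/-- A rigid block: a vertex-induced rigid subgraph, identified with its vertex set. -/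
def RigidBlock (G : SimpleGraph V) (t1 : V → Prop) (S : Set V) : Prop :=
  Rigid (G.induce S) (fun v => t1 ↑v)

/-!
A rigid block `S` with `n₁(S) ≥ 3` amounts to a subgraph of `G` supported on `S` with exactly
`n₁(S) + 2 n₂(S)` edges. For such witnesses `F_A`, `F_B`, the edge counts of `F_A ⊔ F_B` and
`F_A ⊓ F_B` add up to those of `F_A` and `F_B`, and `n₁ + 2 n₂` is modular in the vertex set.
Sparsity bounds `F_A ⊔ F_B` by the count of `A ∪ B`, so `F_A ⊓ F_B` carries at least the count
of `A ∩ B`. As `A ∩ B` is nonempty this count is positive, so `F_A ⊓ F_B` has an edge and `A ∩ B`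
has two vertices; sparsity on `A ∩ B` then forces `n₁(A ∩ B) ≥ 3`, and both bounds are equalities.
-/

section Counting

variable {W : Type*}

theorem n2_eq_n1_not (t1 : V → Prop) (S : Set V) : n2 t1 S = n1 (fun v => ¬ t1 v) S := rfl

theorem n1_image {f : V → W} (hf : f.Injective) (t1 : W → Prop) (T : Set V) :
    n1 t1 (f '' T) = n1 (t1 ∘ f) T := by
  unfold n1
  rw [← Set.ncard_image_of_injective _ hf]
  exact congrArg Set.ncard (Set.image_inter_preimage f T {v | t1 v}).symm

theorem n1_univ_subtype (t1 : V → Prop) (S : Set V) :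
    n1 (fun v : S => t1 v) Set.univ = n1 t1 S := by
  have h := n1_image Subtype.val_injective t1 (Set.univ : Set S)
  rw [Subtype.coe_image_univ] at h
  exact h.symm

theorem n2_univ_subtype (t1 : V → Prop) (S : Set V) :
    n2 (fun v : S => t1 v) Set.univ = n2 t1 S :=
  n1_univ_subtype (fun v => ¬ t1 v) S

variable [Finite V]

theorem n1_add_n2 (t1 : V → Prop) (S : Set V) : n1 t1 S + n2 t1 S = S.ncard :=
  Set.ncard_inter_add_ncard_sdiff_eq_ncard S {v | t1 v}

theorem n1_mono (t1 : V → Prop) {S T : Set V} (h : S ⊆ T) : n1 t1 S ≤ n1 t1 T :=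
  Set.ncard_le_ncard fun _ hv => ⟨h hv.1, hv.2⟩

theorem n1_union_add_n1_inter (t1 : V → Prop) (A B : Set V) :
    n1 t1 (A ∪ B) + n1 t1 (A ∩ B) = n1 t1 A + n1 t1 B := by
  unfold n1
  rw [show {v ∈ A ∪ B | t1 v} = _ from Set.sep_union,
    show {v ∈ A ∩ B | t1 v} = _ from Set.sep_inter, Set.ncard_union_add_ncard_inter]

theorem n2_union_add_n2_inter (t1 : V → Prop) (A B : Set V) :
    n2 t1 (A ∪ B) + n2 t1 (A ∩ B) = n2 t1 A + n2 t1 B :=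
  n1_union_add_n1_inter (fun v => ¬ t1 v) A B

end Counting

section Edges

variable {W : Type*} {G H F : SimpleGraph V} {S : Set V}

theorem ncard_edgeSet_map (f : V ↪ W) (G : SimpleGraph V) :
    (G.map f).edgeSet.ncard = G.edgeSet.ncard := by
  rw [edgeSet_map, Set.ncard_image_of_injective _ f.sym2Map.injective]

theorem one_lt_ncard_of_support_subset [Finite V] (hF : F.support ⊆ S) (hE : F.edgeSet.Nonempty) :
    1 < S.ncard := by
  obtain ⟨e, he⟩ := hE
  induction e using Sym2.ind with
  | _ a b => exact (Set.one_lt_ncard_iff).2 ⟨a, b, hF ⟨b, he⟩, hF ⟨a, he.symm⟩, he.ne⟩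

theorem edgesIn_comap_le [Finite W] (f : V ↪ W) (G : SimpleGraph W) (T : Set V) :
    edgesIn (G.comap f) T ≤ edgesIn G (f '' T) := by
  unfold edgesIn
  rw [← Set.ncard_image_of_injective _ f.sym2Map.injective]
  refine Set.ncard_le_ncard ?_
  rintro _ ⟨e, ⟨he, hT⟩, rfl⟩
  induction e using Sym2.ind with
  | _ a b =>
    refine ⟨he, ?_⟩
    simp only [Function.Embedding.sym2Map_apply, Sym2.map_mk, Sym2.mem_iff]
    rintro v (rfl | rfl)
    exacts [⟨a, hT a (Sym2.mem_mk_left a b), rfl⟩, ⟨b, hT b (Sym2.mem_mk_right a b), rfl⟩]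

variable [Finite V]

theorem edgesIn_mono (h : H ≤ G) (S : Set V) : edgesIn H S ≤ edgesIn G S :=
  Set.ncard_le_ncard fun _ he => ⟨edgeSet_mono h he.1, he.2⟩

theorem ncard_edgeSet_le_edgesIn (h : F ≤ G) (hF : F.support ⊆ S) :
    F.edgeSet.ncard ≤ edgesIn G S := by
  refine Set.ncard_le_ncard fun e he => ⟨edgeSet_mono h he, ?_⟩
  induction e using Sym2.ind with
  | _ a b =>
    simp only [Sym2.mem_iff]
    rintro v (rfl | rfl)
    exacts [hF ⟨b, he⟩, hF ⟨a, he.symm⟩]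

end Edges

namespace Sparse

variable {W : Type*} {G H F : SimpleGraph V} {t1 : V → Prop} {S : Set V}

theorem mono [Finite V] (hG : Sparse G t1) (h : H ≤ G) : Sparse H t1 := fun S hS =>
  (Int.ofNat_le.2 (edgesIn_mono h S)).trans (hG S hS)

theorem comap [Finite W] {G : SimpleGraph W} {t1 : W → Prop} (hG : Sparse G t1) (f : V ↪ W) :
    Sparse (G.comap f) (t1 ∘ f) := by
  intro T hT
  have := hG (f '' T) (by rwa [Set.ncard_image_of_injective _ f.injective])
  rw [n1_image f.injective, n2_eq_n1_not, n1_image f.injective] at this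
  exact (Int.ofNat_le.2 (edgesIn_comap_le f G T)).trans this

variable [Finite V]

theorem ncard_edgeSet_le (hG : Sparse G t1) (hFG : F ≤ G) (hF : F.support ⊆ S)
    (hS : 3 ≤ n1 t1 S) : F.edgeSet.ncard ≤ n1 t1 S + 2 * n2 t1 S := by
  have hsum := n1_add_n2 t1 S
  have hsparse := hG S (by omega)
  have hE := ncard_edgeSet_le_edgesIn hFG hF
  rw [min_eq_left (by omega)] at hsparse
  omega

theorem three_le_n1_of_le_ncard_edgeSet (hG : Sparse G t1) (hFG : F ≤ G)
    (hF : F.support ⊆ S) (hS : S.Nonempty) (hE : n1 t1 S + 2 * n2 t1 S ≤ F.edgeSet.ncard) :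
    3 ≤ n1 t1 S := by
  have hsum := n1_add_n2 t1 S
  have hpos := (Set.ncard_pos).2 hS
  have hedge : F.edgeSet.Nonempty := Set.nonempty_of_ncard_ne_zero (by omega)
  have hsparse := hG S (one_lt_ncard_of_support_subset hF hedge)
  have hle := ncard_edgeSet_le_edgesIn hFG hF
  have hmin := min_le_right (0 : ℤ) (n1 t1 S - 3)
  omega

end Sparse

theorem rigidBlock_iff_exists_subgraph [Finite V] {G : SimpleGraph V} {t1 : V → Prop}
    {S : Set V} (hG : Sparse G t1) (hS : 3 ≤ n1 t1 S) :
    RigidBlock G t1 S ↔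
      ∃ F ≤ G, F.support ⊆ S ∧ F.edgeSet.ncard = n1 t1 S + 2 * n2 t1 S := by
  have hmin : min 0 ((n1 t1 S : ℤ) - 3) = 0 := min_eq_left (by omega)
  constructor
  · rintro ⟨H, hHG, hone | ⟨-, hE⟩⟩
    · rw [Nat.card_coe_set_eq, ← n1_add_n2 t1 S] at hone
      omega
    refine ⟨H.spanningCoe, (map_le_iff_le_comap _ _ _).2 hHG, ?_, ?_⟩
    · rw [support_spanningCoe]
      exact Subtype.coe_image_subset S _
    · rw [n1_univ_subtype, n2_univ_subtype, hmin] at hE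
      rw [ncard_edgeSet_map]
      omega
  · rintro ⟨F, hFG, hF, hE⟩
    refine ⟨F.induce S, comap_monotone _ hFG, Or.inr ⟨(hG.mono hFG).comap _, ?_⟩⟩
    have hcoe : (F.induce S).edgeSet.ncard = F.edgeSet.ncard := by
      conv_rhs => rw [← (F.spanningCoe_induce_eq_self S).2 hF]
      exact (ncard_edgeSet_map _ _).symm
    rw [n1_univ_subtype, n2_univ_subtype, hmin, hcoe, hE]
    push_cast
    ring

/-- If two rigid blocks of a sparse graph intersect in at least one vertex and
each contains at least 3 type-1 vertices, then the intersection contains at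
least 3 type-1 vertices and the union and intersection are rigid blocks. -/
theorem stmt3 {V : Type*} [Fintype V] (G : SimpleGraph V) (t1 : V → Prop)
    (hG : Sparse G t1) (A B : Set V)
    (hA : RigidBlock G t1 A) (hB : RigidBlock G t1 B)
    (h : 1 ≤ (A ∩ B).ncard) (hA1 : 3 ≤ n1 t1 A) (hB1 : 3 ≤ n1 t1 B) :
    3 ≤ n1 t1 (A ∩ B) ∧ RigidBlock G t1 (A ∪ B) ∧ RigidBlock G t1 (A ∩ B) := by
  obtain ⟨FA, hFAG, hFA, hFAE⟩ := (rigidBlock_iff_exists_subgraph hG hA1).1 hA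
  obtain ⟨FB, hFBG, hFB, hFBE⟩ := (rigidBlock_iff_exists_subgraph hG hB1).1 hB
  have hsupG : FA ⊔ FB ≤ G := sup_le hFAG hFBG
  have hinfG : FA ⊓ FB ≤ G := inf_le_left.trans hFAG
  have hsup : (FA ⊔ FB).support ⊆ A ∪ B := by
    rintro v ⟨w, hvw | hvw⟩
    exacts [Or.inl (hFA ⟨w, hvw⟩), Or.inr (hFB ⟨w, hvw⟩)]
  have hinf : (FA ⊓ FB).support ⊆ A ∩ B := fun v ⟨w, hwA, hwB⟩ =>
    ⟨hFA ⟨w, hwA⟩, hFB ⟨w, hwB⟩⟩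
  have hU1 : 3 ≤ n1 t1 (A ∪ B) := hA1.trans (n1_mono t1 Set.subset_union_left)
  have hmod : (FA ⊔ FB).edgeSet.ncard + (FA ⊓ FB).edgeSet.ncard =
      FA.edgeSet.ncard + FB.edgeSet.ncard := by
    rw [edgeSet_sup, edgeSet_inf, Set.ncard_union_add_ncard_inter]
  have h1 := n1_union_add_n1_inter t1 A B
  have h2 := n2_union_add_n2_inter t1 A B
  have hsupE := hG.ncard_edgeSet_le hsupG hsup hU1
  have hI1 : 3 ≤ n1 t1 (A ∩ B) :=
    hG.three_le_n1_of_le_ncard_edgeSet hinfG hinf (Set.nonempty_of_ncard_ne_zero (by omega))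
      (by omega)
  have hinfE := hG.ncard_edgeSet_le hinfG hinf hI1
  exact ⟨hI1, (rigidBlock_iff_exists_subgraph hG hU1).2 ⟨_, hsupG, hsup, by omega⟩,
    (rigidBlock_iff_exists_subgraph hG hI1).2 ⟨_, hinfG, hinf, by omega⟩⟩
end

section
/- A graph G with type 1 and type 2 vertices is 1.5-orientable if and only if every induced subgraph G' of G satisfies m' ≤ n₁' + 2n₂', where m' is the number of edges and n₁', n₂' the number of type 1, type 2 vertices of G'. -/
open SimpleGraph

variable {V : Type*}

/-- 1.5-orientability: an orientation (choice of a head endpoint for each edge)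
such that type-1 vertices have in-degree at most 1 and type-2 vertices have
in-degree at most 2. -/
def Orientable (G : SimpleGraph V) (t1 : V → Prop) : Prop :=
  ∃ f : G.edgeSet → V, (∀ e : G.edgeSet, f e ∈ (e : Sym2 V)) ∧
    ∀ v : V, (t1 v → {e : G.edgeSet | f e = v}.ncard ≤ 1) ∧
      {e : G.edgeSet | f e = v}.ncard ≤ 2

/-
Orienting the edges so that every vertex `v` has in-degree at most `c v` amounts to matching each
edge to one of the `c v` slots of one of its endpoints. The slots seen by a set `s` of edges are
those of the vertex set `S` it spans, and `S` spans at least `#s` edges, so Hall's condition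
follows from `edgesIn G S ≤ ∑ v ∈ S, c v`. Conversely, every edge spanned by `S` has its head
in `S`.
-/

def OrientableWithin (G : SimpleGraph V) (c : V → ℕ) : Prop :=
  ∃ f : G.edgeSet → V, (∀ e : G.edgeSet, f e ∈ (e : Sym2 V)) ∧
    ∀ v : V, {e : G.edgeSet | f e = v}.ncard ≤ c v

lemma orientable_iff_orientableWithin (G : SimpleGraph V) (t1 : V → Prop) [DecidablePred t1] :
    Orientable G t1 ↔ OrientableWithin G (fun v => if t1 v then 1 else 2) := by
  refine exists_congr fun f => and_congr_right fun _ => forall_congr' fun v => ?_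
  by_cases hv : t1 v <;> simp only [hv, if_true, if_false, true_imp_iff, false_imp_iff, true_and]
  exact ⟨fun h => h.1, fun h => ⟨h, h.trans one_le_two⟩⟩

section OrientableWithin

variable [Fintype V] {G : SimpleGraph V} {c : V → ℕ}

open Classical in
lemma edgesIn_le_sum_of_orientableWithin (h : OrientableWithin G c) (S : Finset V) :
    edgesIn G S ≤ ∑ v ∈ S, c v := by
  obtain ⟨f, hf, hdeg⟩ := h
  have hspanned : {e ∈ G.edgeSet | ∀ v ∈ e, v ∈ (S : Set V)} ⊆
      Subtype.val '' (↑(S.biUnion fun v => Finset.univ.filter (f · = v)) : Set G.edgeSet) := by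
    rintro e ⟨he, heS⟩
    exact ⟨⟨e, he⟩, by simpa using heS _ (hf ⟨e, he⟩), rfl⟩
  calc edgesIn G S
      ≤ (S.biUnion fun v => Finset.univ.filter (f · = v)).card :=
        (Set.ncard_le_ncard hspanned (Set.toFinite _)).trans
          ((Set.ncard_image_le (Finset.finite_toSet _)).trans (Set.ncard_coe_finset _).le)
    _ ≤ ∑ v ∈ S, (Finset.univ.filter (f · = v)).card := Finset.card_biUnion_le
    _ ≤ ∑ v ∈ S, c v := Finset.sum_le_sum fun v _ => by
        simpa [Set.ncard_eq_toFinset_card'] using hdeg v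

open Classical in
lemma orientableWithin_of_edgesIn_le (h : ∀ S : Finset V, edgesIn G S ≤ ∑ v ∈ S, c v) :
    OrientableWithin G c := by
  let slots : G.edgeSet → Finset (Σ v, Fin (c v)) := fun e =>
    Finset.univ.filter fun p => p.1 ∈ (e : Sym2 V)
  have hall : ∀ s : Finset G.edgeSet, s.card ≤ (s.biUnion slots).card := by
    intro s
    let S : Finset V := Finset.univ.filter fun v => ∃ e ∈ s, v ∈ (e : Sym2 V)
    have hslots : s.biUnion slots = S.sigma fun _ => Finset.univ := by
      ext p
      simp [slots, S]
    have hspanned : s.card ≤ edgesIn G S := by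
      rw [← Finset.card_map (Function.Embedding.subtype _), ← Set.ncard_coe_finset]
      refine Set.ncard_le_ncard ?_ (Set.toFinite _)
      intro x hx
      obtain ⟨e, he, rfl⟩ := Finset.mem_map.1 hx
      exact ⟨e.2, fun v hv => Finset.mem_coe.2 (Finset.mem_filter.2 ⟨Finset.mem_univ v, e, he, hv⟩)⟩
    simpa [hslots, Finset.card_sigma] using hspanned.trans (h S)
  obtain ⟨f, hinj, hf⟩ := (Finset.all_card_le_biUnion_card_iff_exists_injective slots).1 hall
  refine ⟨fun e => (f e).1, fun e => by simpa [slots] using hf e, fun v => ?_⟩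
  calc {e : G.edgeSet | (f e).1 = v}.ncard
      ≤ (Set.range (Sigma.mk (β := fun w => Fin (c w)) v)).ncard := by
        refine Set.ncard_le_ncard_of_injOn f (fun e he => ?_) hinj.injOn
        rcases hfe : f e with ⟨w, i⟩
        rw [Set.mem_ofPred_eq, hfe] at he
        subst he
        exact ⟨i, rfl⟩
    _ = c v := by rw [Set.ncard_range_of_injective sigma_mk_injective, Nat.card_eq_fintype_card,
        Fintype.card_fin]

theorem orientableWithin_iff_forall_edgesIn_le :
    OrientableWithin G c ↔ ∀ S : Finset V, edgesIn G S ≤ ∑ v ∈ S, c v :=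
  ⟨edgesIn_le_sum_of_orientableWithin, orientableWithin_of_edgesIn_le⟩

end OrientableWithin

lemma sum_ite_one_two_eq_n1_add_two_mul_n2 (t1 : V → Prop) [DecidablePred t1] (S : Finset V) :
    ∑ v ∈ S, (if t1 v then 1 else 2) = n1 t1 S + 2 * n2 t1 S := by
  have hcount (p : V → Prop) [DecidablePred p] :
      {v ∈ (S : Set V) | p v}.ncard = (S.filter p).card := by
    simp [← Set.ncard_coe_finset]
  rw [n1, n2, hcount, hcount, Finset.sum_ite]
  simp only [Finset.sum_const, smul_eq_mul, mul_one, mul_comm]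

/-- A graph is 1.5-orientable iff every induced subgraph `G'` satisfies
`m' ≤ n₁' + 2 n₂'`. -/
theorem stmt5 {V : Type*} [Fintype V] (G : SimpleGraph V) (t1 : V → Prop) :
    Orientable G t1 ↔
      ∀ S : Set V, edgesIn G S ≤ n1 t1 S + 2 * n2 t1 S := by
  classical
  rw [orientable_iff_orientableWithin, orientableWithin_iff_forall_edgesIn_le]
  refine ⟨fun h S => ?_, fun h S => ?_⟩
  · simpa [sum_ite_one_two_eq_n1_add_two_mul_n2] using h S.toFinset
  · simpa [← sum_ite_one_two_eq_n1_add_two_mul_n2] using h S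
end

section
/- Let G be a rigid graph with at least 2 vertices and let v be a vertex of type i (i ∈ {1,2}) with degree exactly i in G. Then the graph G \ {v} obtained by deleting v is rigid. -/
open SimpleGraph

variable {V : Type*}

lemma image_sep (p : V → Prop) (S : Set V) (T : Set ↥S) :
    {x ∈ Subtype.val '' T | p x} = Subtype.val '' {x ∈ T | p ↑x} := by
  ext x; constructor
  · rintro ⟨⟨a, ha, rfl⟩, ht⟩; exact ⟨a, ⟨ha, ht⟩, rfl⟩
  · rintro ⟨a, ⟨ha, ht⟩, rfl⟩; exact ⟨⟨a, ha, rfl⟩, ht⟩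

lemma n1_subtype (t1 : V → Prop) (S : Set V) (T : Set ↥S) :
    n1 (fun v : ↥S => t1 ↑v) T = n1 t1 (Subtype.val '' T) := by
  unfold n1
  rw [image_sep, Set.ncard_image_of_injective _ Subtype.val_injective]

lemma n2_subtype (t1 : V → Prop) (S : Set V) (T : Set ↥S) :
    n2 (fun v : ↥S => t1 ↑v) T = n2 t1 (Subtype.val '' T) := by
  unfold n2
  rw [image_sep, Set.ncard_image_of_injective _ Subtype.val_injective]

lemma edgesIn_induce (G : SimpleGraph V) (S : Set V) (T : Set ↥S) :
    edgesIn (G.induce S) T = edgesIn G (Subtype.val '' T) := by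
  unfold edgesIn
  have hinj : Function.Injective (Sym2.map (Subtype.val : ↥S → V)) :=
    Sym2.map.injective Subtype.val_injective
  rw [← Set.ncard_image_of_injective _ hinj]
  congr 1
  ext e
  constructor
  · rintro ⟨e', ⟨he', hT⟩, rfl⟩
    induction e' using Sym2.ind with
    | _ a b =>
      refine ⟨he', ?_⟩
      intro x hx
      rw [Sym2.map_pair_eq, Sym2.mem_iff] at hx
      rcases hx with rfl | rfl
      · exact ⟨a, hT a (Sym2.mem_mk_left a b), rfl⟩
      · exact ⟨b, hT b (Sym2.mem_mk_right a b), rfl⟩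
  · induction e using Sym2.ind with
    | _ x y =>
      rintro ⟨he, hT⟩
      obtain ⟨a, ha, rfl⟩ := hT x (Sym2.mem_mk_left x y)
      obtain ⟨b, hb, rfl⟩ := hT _ (Sym2.mem_mk_right _ _)
      refine ⟨s(a, b), ⟨he, ?_⟩, by rw [Sym2.map_pair_eq]⟩
      intro z hz
      rcases Sym2.mem_iff.mp hz with rfl | rfl
      exacts [ha, hb]

lemma edge_count_split [Fintype V] (H : SimpleGraph V) (v : V) :
    H.edgeSet.ncard = edgesIn H {w | w ≠ v} + (H.neighborSet v).ncard := by
  classical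
  have hpart : H.edgeSet =
      {e ∈ H.edgeSet | ∀ x ∈ e, x ∈ {w | w ≠ v}} ∪ H.incidenceSet v := by
    ext e
    constructor
    · intro he
      by_cases hvmem : v ∈ e
      · exact Or.inr ⟨he, hvmem⟩
      · exact Or.inl ⟨he, fun x hx hxv => hvmem (hxv ▸ hx)⟩
    · rintro (⟨he, _⟩ | ⟨he, _⟩) <;> exact he
  have hdisj : Disjoint {e ∈ H.edgeSet | ∀ x ∈ e, x ∈ {w | w ≠ v}} (H.incidenceSet v) := by
    rw [Set.disjoint_left]
    rintro e ⟨_, hall⟩ ⟨_, hvmem⟩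
    exact hall v hvmem rfl
  have hni : (H.incidenceSet v).ncard = (H.neighborSet v).ncard := by
    rw [← Nat.card_coe_set_eq, ← Nat.card_coe_set_eq]
    exact Nat.card_congr (H.incidenceSetEquivNeighborSet v)
  rw [hpart, Set.ncard_union_eq hdisj (Set.toFinite _) (Set.toFinite _), hni]
  rfl

lemma n1_split_pos [Fintype V] {t1 : V → Prop} {v : V} (ht : t1 v) :
    n1 t1 (Set.univ : Set V) = n1 t1 {w | w ≠ v} + 1 := by
  classical
  unfold n1
  have : {x ∈ (Set.univ : Set V) | t1 x} = insert v {x ∈ {w | w ≠ v} | t1 x} := by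
    ext x
    simp only [Set.mem_setOf_eq, Set.mem_insert_iff, Set.mem_sep_iff, Set.mem_univ, true_and]
    constructor
    · intro hx
      by_cases hxv : x = v
      · exact Or.inl hxv
      · exact Or.inr ⟨hxv, hx⟩
    · rintro (rfl | ⟨_, hx⟩) <;> [exact ht; exact hx]
  rw [this, Set.ncard_insert_of_notMem (by simp) (Set.toFinite _)]

lemma n1_split_neg [Fintype V] {t1 : V → Prop} {v : V} (ht : ¬ t1 v) :
    n1 t1 (Set.univ : Set V) = n1 t1 {w | w ≠ v} := by
  unfold n1
  congr 1
  ext x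
  simp only [Set.mem_setOf_eq, Set.mem_sep_iff, Set.mem_univ, true_and]
  constructor
  · intro hx; exact ⟨fun h => ht (h ▸ hx), hx⟩
  · rintro ⟨_, hx⟩; exact hx

lemma n2_split_pos [Fintype V] {t1 : V → Prop} {v : V} (ht : ¬ t1 v) :
    n2 t1 (Set.univ : Set V) = n2 t1 {w | w ≠ v} + 1 := by
  have := n1_split_pos (t1 := fun x => ¬ t1 x) (v := v) ht
  unfold n1 at this
  unfold n2
  exact this

lemma n2_split_neg [Fintype V] {t1 : V → Prop} {v : V} (ht : t1 v) :
    n2 t1 (Set.univ : Set V) = n2 t1 {w | w ≠ v} := by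
  have := n1_split_neg (t1 := fun x => ¬ t1 x) (v := v) (not_not_intro ht)
  unfold n1 at this
  unfold n2
  exact this

lemma ncard_univ_split [Fintype V] (v : V) :
    Nat.card V = ({w | w ≠ v} : Set V).ncard + 1 := by
  classical
  have : (Set.univ : Set V) = insert v {w | w ≠ v} := by
    ext x; by_cases hx : x = v <;> simp [hx]
  rw [← Set.ncard_univ, this, Set.ncard_insert_of_notMem (by simp) (Set.toFinite _)]

/-- Deleting from a rigid graph (on at least 2 vertices) a type-`i` vertex of
degree exactly `i` leaves a rigid graph. -/
theorem stmt12 {V : Type*} [Fintype V] (G : SimpleGraph V) [DecidableRel G.Adj]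
    (t1 : V → Prop) (h : Rigid G t1) (h2 : 2 ≤ Nat.card V) (v : V)
    (hv : (t1 v ∧ G.degree v = 1) ∨ (¬ t1 v ∧ G.degree v = 2)) :
    Rigid (G.induce {w | w ≠ v}) (fun w => t1 ↑w) := by
  classical
  set S : Set V := {w | w ≠ v} with hSdef
  obtain ⟨H, hHG, hH⟩ := h
  refine ⟨H.induce S, fun {a b} hab => hHG hab, ?_⟩
  by_cases hone : Nat.card ↥S = 1
  · exact Or.inl hone
  have hcardS : Nat.card V = S.ncard + 1 := ncard_univ_split v
  have hS2 : 2 ≤ S.ncard := by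
    have : Nat.card ↥S = S.ncard := Nat.card_coe_set_eq S
    omega
  obtain hH1 | ⟨hHsp, hHcnt⟩ := hH
  · omega
  refine Or.inr ⟨?_, ?_⟩
  · intro T hT
    rw [edgesIn_induce, n1_subtype, n2_subtype]
    exact hHsp (Subtype.val '' T)
      (by rwa [Set.ncard_image_of_injective _ Subtype.val_injective])
  · have hcnt' : (H.induce S).edgeSet.ncard = edgesIn H S := by
      have : (H.induce S).edgeSet.ncard = edgesIn (H.induce S) Set.univ := by
        unfold edgesIn
        congr 1
        ext e; simp
      rw [this, edgesIn_induce, Subtype.coe_image_univ]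
    rw [hcnt', n1_subtype, n2_subtype, Subtype.coe_image_univ]
    have hsplit := edge_count_split H v
    rw [← hSdef] at hsplit
    have hdle : (H.neighborSet v).ncard ≤ G.degree v := by
      have hsub : H.neighborSet v ⊆ G.neighborSet v := fun w hw => hHG hw
      calc (H.neighborSet v).ncard ≤ (G.neighborSet v).ncard :=
            Set.ncard_le_ncard hsub (Set.toFinite _)
        _ = G.degree v := by
            rw [Set.ncard_eq_toFinset_card']
            exact congrArg Finset.card (SimpleGraph.neighborFinset_def G v).symm
    have hsp := hHsp S hS2
    set a := n1 t1 S
    set b := n2 t1 S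
    set eI := edgesIn H S
    set dH := (H.neighborSet v).ncard
    rcases hv with ⟨ht, hdeg⟩ | ⟨ht, hdeg⟩
    · rw [n1_split_pos ht, n2_split_neg ht, ← hSdef] at hHcnt
      push_cast at hHcnt hsp ⊢
      rcases le_or_gt 3 a with h3 | h3
      · have hm3 : min 0 ((a : ℤ) - 3) = 0 := by
          apply min_eq_left; omega
        have hm2 : min 0 ((a : ℤ) + 1 - 3) = 0 := by
          apply min_eq_left; omega
        rw [hm3] at hsp ⊢
        rw [hm2] at hHcnt
        omega
      · have hm3 : min 0 ((a : ℤ) - 3) = (a : ℤ) - 3 := by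
          apply min_eq_right; omega
        have hm2 : min 0 ((a : ℤ) + 1 - 3) = (a : ℤ) + 1 - 3 := by
          apply min_eq_right; omega
        rw [hm3] at hsp ⊢
        rw [hm2] at hHcnt
        omega
    · rw [n1_split_neg ht, n2_split_pos ht, ← hSdef] at hHcnt
      push_cast at hHcnt hsp ⊢
      set m3 := min 0 ((a : ℤ) - 3) with hm3def
      omega
end
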